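/- Machine termination for typed terms: if M is a closed term with ⊢ M : rev(σ⃗) ⟹ τ⃗ where σ⃗ = σ_1…σ_n, and S = ε·N_1·…·N_n is a stack of closed terms with ⊢ N_i : σ_i for each i, then the machine started at (S, M) terminates: there is a stack T with a run (S, M) ⇓ (T, *). -/

import Mathlib

/-- Terms of the sequential λ-calculus in de Bruijn representation
(so terms are automatically identified up to α-equivalence):
nil `*`, variable prefix `x.M`, push/application `[N].M`,
and pop/abstraction `<x>.M`. -/
inductive STm : Type
  | star : STm
  | var  : Nat → STm → STm
  | push : STm → STm → STm
  | pop  : STm → STm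

namespace STm

/-- Lifting of a renaming under a binder. -/
def liftF (f : Nat → Nat) : Nat → Nat
  | 0 => 0
  | n+1 => f n + 1

/-- Renaming of de Bruijn indices. -/
def rename (f : Nat → Nat) : STm → STm
  | star => star
  | var n M => var (f n) (rename f M)
  | push N M => push (rename f N) (rename f M)
  | pop M => pop (rename (liftF f) M)

/-- Capture-avoiding composition `N ; M`. -/
def comp : STm → STm → STm
  | star, P => P
  | var n N, P => var n (comp N P)
  | push Q N, P => push Q (comp N P)
  | pop N, P => pop (comp N (rename Nat.succ P))

/-- Lifting of a substitution under a binder. -/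
def liftS (σ : Nat → STm) : Nat → STm
  | 0 => var 0 star
  | n+1 => rename Nat.succ (σ n)

/-- Capture-avoiding simultaneous substitution; note
`{N/x}(x.M) = N ; {N/x}M`. -/
def subst (σ : Nat → STm) : STm → STm
  | star => star
  | var n M => comp (σ n) (subst σ M)
  | push N M => push (subst σ N) (subst σ M)
  | pop M => pop (subst (liftS σ) M)

/-- Capture-avoiding substitution `{N/x}M` of `N` for the variable bound
immediately outside `M`. -/
def subst1 (N : STm) : STm → STm :=
  subst (fun n => match n with | 0 => N | n+1 => var n star)

end STm

/-- Machine states: a stack of terms (written bottom-first, so the top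
element is the last element of the list) together with a term. -/
abbrev SState := List STm × STm

/-- The transitions of the sequential stack machine:
`(S, [N].M) → (S·N, M)` and `(S·N, <x>.M) → (S, {N/x}M)`. -/
inductive SMStep : SState → SState → Prop
  | push (S : List STm) (N M : STm) : SMStep (S, .push N M) (S ++ [N], M)
  | pop (S : List STm) (N M : STm) : SMStep (S ++ [N], .pop M) (S, STm.subst1 N M)

/-- A run of the sequential machine: a finite sequence of transitions. -/
def SRun : SState → SState → Prop := Relation.ReflTransGen SMStep

/-- Sequential types `ρ_n…ρ_1 ⟹ τ_1…τ_m`: an implication between two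
finite vectors of sequential types. The first list is the input vector
as written (i.e. `arr (rev ρ⃗) τ⃗` represents `rev(ρ⃗) ⟹ τ⃗`). -/
inductive STy : Type
  | arr : List STy → List STy → STy

/-- Typing judgments `Γ ⊢ M : τ` of the sequential λ-calculus, with the
context `Γ` a finite map from (de Bruijn) variables to types, given as a
list. -/
inductive Typing : List STy → STm → STy → Prop
  | star (Γ : List STy) (τs : List STy) :
      Typing Γ .star (.arr τs.reverse τs)
  | var (Γ : List STy) (n : Nat) (M : STm) (ρs σs τs υs : List STy) :
      Γ[n]? = some (.arr ρs.reverse σs) →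
      Typing Γ M (.arr (σs.reverse ++ τs.reverse) υs) →
      Typing Γ (.var n M) (.arr (ρs.reverse ++ τs.reverse) υs)
  | abs (Γ : List STy) (M : STm) (ρ : STy) (σs τs : List STy) :
      Typing (ρ :: Γ) M (.arr σs.reverse τs) →
      Typing Γ (.pop M) (.arr (ρ :: σs.reverse) τs)
  | app (Γ : List STy) (N M : STm) (ρ : STy) (σs τs : List STy) :
      Typing Γ N ρ →
      Typing Γ M (.arr (ρ :: σs.reverse) τs) →
      Typing Γ (.push N M) (.arr σs.reverse τs)

/-!
Tait-style reducibility. A term is reducible at `rev(σ⃗) ⟹ τ⃗` when, started on any stack of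
terms reducible at `σ⃗`, the machine reaches `*` with a stack of terms reducible at `τ⃗`.
Every typed term is reducible under every reducible substitution, and reducibility of a
closed term at its type is exactly the termination claim. The crucial case is the variable
prefix `x.M`, i.e. the composition `N ; M`: a run of `N` to `*` remains a run when the stack
is extended at the bottom and when the term is composed on the right with `M`, after which
`M` takes over.
-/

theorem exists_split_of_forall₂_append {α β : Type*} {R : α → β → Prop} {a c : List α}
    {L : List β} (h : List.Forall₂ R (a ++ c) L) :
    ∃ A C, L = A ++ C ∧ List.Forall₂ R a A ∧ List.Forall₂ R c C := by
  induction a generalizing L with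
  | nil => exact ⟨[], L, rfl, .nil, h⟩
  | cons x a ih =>
    obtain ⟨y, L, hxy, hL, rfl⟩ := List.forall₂_cons_left_iff.1 h
    obtain ⟨A, C, rfl, hA, hC⟩ := ih hL
    exact ⟨y :: A, C, rfl, .cons hxy hA, hC⟩

namespace STm

theorem liftF_comp (f g : Nat → Nat) :
    (fun n => liftF g (liftF f n)) = liftF (fun n => g (f n)) := by
  funext n; cases n <;> rfl

theorem rename_rename (f g : Nat → Nat) (M : STm) :
    rename g (rename f M) = rename (fun n => g (f n)) M := by
  induction M generalizing f g with
  | star => rfl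
  | var n M ih => simp [rename, ih]
  | push N M ihN ihM => simp [rename, ihN, ihM]
  | pop M ih => simp [rename, ih, liftF_comp]

theorem rename_comp (f : Nat → Nat) (A B : STm) :
    rename f (comp A B) = comp (rename f A) (rename f B) := by
  induction A generalizing f B with
  | star => rfl
  | var n A ih => simp [comp, rename, ih]
  | push Q A _ ihA => simp [comp, rename, ihA]
  | pop A ih => simp only [comp, rename, ih, rename_rename]; rfl

theorem comp_assoc (A B C : STm) : comp (comp A B) C = comp A (comp B C) := by
  induction A generalizing B C with
  | star => rfl
  | var n A ih => simp [comp, ih]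
  | push Q A _ ihA => simp [comp, ihA]
  | pop A ih => simp [comp, ih, rename_comp]

@[simp] theorem comp_star (M : STm) : comp M star = M := by
  induction M with
  | star => rfl
  | var n M ih => simp [comp, ih]
  | push N M _ ihM => simp [comp, ihM]
  | pop M ih => simpa [comp, rename] using ih

theorem subst_rename (σ : Nat → STm) (f : Nat → Nat) (M : STm) :
    subst σ (rename f M) = subst (fun n => σ (f n)) M := by
  induction M generalizing σ f with
  | star => rfl
  | var n M ih => simp [rename, subst, ih]
  | push N M ihN ihM => simp [rename, subst, ihN, ihM]
  | pop M ih =>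
    have hlift : (fun n => liftS σ (liftF f n)) = liftS (fun n => σ (f n)) := by
      funext n; cases n <;> rfl
    simp only [rename, subst, ih, hlift]

theorem rename_subst (f : Nat → Nat) (σ : Nat → STm) (M : STm) :
    rename f (subst σ M) = subst (fun n => rename f (σ n)) M := by
  induction M generalizing σ f with
  | star => rfl
  | var n M ih => simp [subst, rename_comp, ih]
  | push N M ihN ihM => simp [subst, rename, ihN, ihM]
  | pop M ih =>
    have hlift : (fun n => rename (liftF f) (liftS σ n)) = liftS (fun n => rename f (σ n)) := by
      funext n
      cases n with
      | zero => rfl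
      | succ n => simp only [liftS, rename_rename]; rfl
    simp only [subst, rename, ih, hlift]

theorem subst_liftS_rename_succ (σ : Nat → STm) (M : STm) :
    subst (liftS σ) (rename Nat.succ M) = rename Nat.succ (subst σ M) := by
  rw [subst_rename, rename_subst]; rfl

theorem subst_comp (σ : Nat → STm) (A B : STm) :
    subst σ (comp A B) = comp (subst σ A) (subst σ B) := by
  induction A generalizing σ B with
  | star => rfl
  | var n A ih => simp [comp, subst, ih, comp_assoc]
  | push Q A _ ihA => simp [comp, subst, ihA]
  | pop A ih => simp [comp, subst, ih, subst_liftS_rename_succ]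

theorem subst_subst (τ σ : Nat → STm) (M : STm) :
    subst τ (subst σ M) = subst (fun n => subst τ (σ n)) M := by
  induction M generalizing σ τ with
  | star => rfl
  | var n M ih => simp [subst, subst_comp, ih]
  | push N M ihN ihM => simp [subst, ihN, ihM]
  | pop M ih =>
    have hlift : (fun n => subst (liftS τ) (liftS σ n)) = liftS (fun n => subst τ (σ n)) := by
      funext n
      cases n with
      | zero => rfl
      | succ n => exact subst_liftS_rename_succ τ (σ n)
    simp only [subst, ih, hlift]

def idS : Nat → STm := fun n => var n star

@[simp] theorem liftS_idS : liftS idS = idS := by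
  funext n; cases n <;> rfl

@[simp] theorem subst_idS (M : STm) : subst idS M = M := by
  induction M with
  | star => rfl
  | var n M ih => simp [subst, idS, comp, ih]
  | push N M ihN ihM => simp [subst, ihN, ihM]
  | pop M ih => simp [subst, ih]

theorem subst1_rename_succ (N M : STm) : subst1 N (rename Nat.succ M) = M := by
  rw [subst1, subst_rename]
  exact subst_idS M

def consS (N : STm) (σ : Nat → STm) : Nat → STm
  | 0 => N
  | n+1 => σ n

theorem subst1_subst_liftS (N : STm) (σ : Nat → STm) (M : STm) :
    subst1 N (subst (liftS σ) M) = subst (consS N σ) M := by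
  rw [subst1, subst_subst]
  congr 1
  funext n
  cases n with
  | zero => exact comp_star N
  | succ n => exact subst1_rename_succ N (σ n)

end STm

theorem SMStep.frame {s t : SState} (U : List STm) (h : SMStep s t) :
    SMStep (U ++ s.1, s.2) (U ++ t.1, t.2) := by
  cases h with
  | push S N M => simpa using SMStep.push (U ++ S) N M
  | pop S N M => simpa using SMStep.pop (U ++ S) N M

theorem SRun.frame {s t : SState} (U : List STm) (h : SRun s t) :
    SRun (U ++ s.1, s.2) (U ++ t.1, t.2) :=
  Relation.ReflTransGen.lift (fun s : SState => (U ++ s.1, s.2))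
    (fun _ _ => SMStep.frame U) _ _ h

/-- In the `pop` case `Q` is shifted under the binder of `<x>`, and `{N/x}` undoes that shift. -/
theorem SMStep.comp {s t : SState} (Q : STm) (h : SMStep s t) :
    SMStep (s.1, STm.comp s.2 Q) (t.1, STm.comp t.2 Q) := by
  cases h with
  | push S N M => exact SMStep.push S N (STm.comp M Q)
  | pop S N M =>
    have h := SMStep.pop S N (STm.comp M (STm.rename Nat.succ Q))
    rwa [STm.subst1, STm.subst_comp, ← STm.subst1, STm.subst1_rename_succ] at h

theorem SRun.comp {s t : SState} (Q : STm) (h : SRun s t) :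
    SRun (s.1, STm.comp s.2 Q) (t.1, STm.comp t.2 Q) :=
  Relation.ReflTransGen.lift (fun s : SState => (s.1, STm.comp s.2 Q))
    (fun _ _ => SMStep.comp Q) _ _ h

mutual

/-- The input stack is quantified top element first, so that it lines up with `is`. -/
def Red : STy → STm → Prop
  | .arr is os, M => ∀ S : List STm, RedList is S →
      ∃ T : List STm, RedList os T ∧ SRun (S.reverse, M) (T, .star)

def RedList : List STy → List STm → Prop
  | [], [] => True
  | σ :: σs, N :: Ns => Red σ N ∧ RedList σs Ns
  | _, _ => False

end

theorem redList_iff_forall₂ {σs : List STy} {Ns : List STm} :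
    RedList σs Ns ↔ List.Forall₂ Red σs Ns := by
  induction σs generalizing Ns with
  | nil => cases Ns <;> simp [RedList]
  | cons σ σs ih => cases Ns <;> simp [RedList, ih]

theorem red_arr_iff {is os : List STy} {M : STm} :
    Red (.arr is os) M ↔ ∀ S : List STm, List.Forall₂ Red is S →
      ∃ T : List STm, List.Forall₂ Red os T ∧ SRun (S.reverse, M) (T, .star) := by
  simp only [Red, redList_iff_forall₂]

theorem red_star (τs : List STy) : Red (.arr τs.reverse τs) .star := by
  refine red_arr_iff.2 fun S hS => ⟨S.reverse, ?_, .refl⟩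
  simpa using List.rel_reverse hS

theorem Red.comp {a b c d : List STy} {P Q : STm}
    (hP : Red (.arr a b) P) (hQ : Red (.arr (b.reverse ++ c) d) Q) :
    Red (.arr (a ++ c) d) (STm.comp P Q) := by
  refine red_arr_iff.2 fun S hS => ?_
  obtain ⟨A, C, rfl, hA, hC⟩ := exists_split_of_forall₂_append hS
  obtain ⟨B, hB, hrunP⟩ := red_arr_iff.1 hP A hA
  obtain ⟨T, hT, hrunQ⟩ := red_arr_iff.1 hQ (B.reverse ++ C)
    (List.rel_append (List.rel_reverse hB) hC)
  have hrun : SRun ((A ++ C).reverse, STm.comp P Q) (C.reverse ++ B, Q) := by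
    simpa [STm.comp] using (hrunP.frame C.reverse).comp Q
  rw [List.reverse_append, List.reverse_reverse] at hrunQ
  exact ⟨T, hT, Relation.ReflTransGen.trans hrun hrunQ⟩

theorem red_pop {ρ : STy} {σs τs : List STy} {M : STm}
    (h : ∀ N, Red ρ N → Red (.arr σs τs) (STm.subst1 N M)) :
    Red (.arr (ρ :: σs) τs) (.pop M) := by
  refine red_arr_iff.2 fun S hS => ?_
  obtain ⟨N, R, hN, hR, rfl⟩ := List.forall₂_cons_left_iff.1 hS
  obtain ⟨T, hT, hrun⟩ := red_arr_iff.1 (h N hN) R hR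
  exact ⟨T, hT, .head (by simpa using SMStep.pop R.reverse N M) hrun⟩

theorem Red.push {ρ : STy} {σs τs : List STy} {N M : STm}
    (hN : Red ρ N) (hM : Red (.arr (ρ :: σs) τs) M) :
    Red (.arr σs τs) (.push N M) := by
  refine red_arr_iff.2 fun S hS => ?_
  obtain ⟨T, hT, hrun⟩ := red_arr_iff.1 hM (N :: S) (.cons hN hS)
  exact ⟨T, hT, .head (by simpa using SMStep.push S.reverse N M) hrun⟩

theorem Typing.red_subst {Γ : List STy} {M : STm} {τ : STy} (h : Typing Γ M τ)
    {θ : Nat → STm} (hθ : ∀ n ρ, Γ[n]? = some ρ → Red ρ (θ n)) :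
    Red τ (STm.subst θ M) := by
  induction h generalizing θ with
  | star _ τs => exact red_star τs
  | var _ n _ _ _ _ _ hn _ ih =>
    exact Red.comp (hθ n _ hn) (by simpa using ih hθ)
  | abs _ _ _ _ _ _ ih =>
    refine red_pop fun N hN => ?_
    rw [STm.subst1_subst_liftS]
    refine ih fun n υ hn => ?_
    cases n with
    | zero => exact Option.some_injective _ hn ▸ hN
    | succ n => exact hθ n υ hn
  | app _ _ _ _ _ _ _ _ ihN ihM => exact (ihN hθ).push (ihM hθ)

theorem Typing.red {M : STm} {τ : STy} (h : Typing [] M τ) : Red τ M := by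
  simpa using h.red_subst (θ := STm.idS) (by simp)

/-- Machine termination for typed terms: if `⊢ M : rev(σ⃗) ⟹ τ⃗` for a closed
term `M`, and `S = ε·N_1·…·N_n` is a stack of closed terms with `⊢ N_i : σ_i`
for each `i`, then the machine started at `(S, M)` terminates: there is a
stack `T` with a run `(S, M) ⇓ (T, *)`. -/
theorem seq_machine_termination (M : STm) (σs τs : List STy) (S : List STm)
    (hM : Typing [] M (.arr σs.reverse τs))
    (hS : List.Forall₂ (fun σ N => Typing [] N σ) σs S) :
    ∃ T : List STm, SRun (S, M) (T, .star) := by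
  have hSred : List.Forall₂ Red σs.reverse S.reverse :=
    List.rel_reverse (hS.imp fun _ _ h => h.red)
  obtain ⟨T, -, hrun⟩ := red_arr_iff.1 hM.red S.reverse hSred
  exact ⟨T, by simpa using hrun⟩
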